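/- arXiv:2105.02130 — 5 statements merged into one kernel-verified Lean document; each statement's English description precedes it below -/
import Mathlib

section
/- The set of ρ-regular points of a smooth Lie group action ρ : G × M → M is a G-invariant, open, dense subset of M. -/
/-!
The isotropy dimension `m ↦ dim ker (d(g ↦ g • m))₁` is upper semicontinuous: in tangent
coordinates the differentials of the orbit maps form a continuous family of linear maps, and the
rank of such a family can only jump up. An upper semicontinuous `ℕ`-valued function is locally
constant near each point where it attains its minimum over an open set, so the points where it is
locally constant are dense; they form an open set for any function. Finally, `h • (g • m)` is
`g • ((g⁻¹ h g) • m)`, so the orbit map of `g • m` is that of `m` composed with diffeomorphisms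
on both sides; hence the isotropy dimension, and with it the set of regular points, is
`G`-invariant.
-/

open Manifold Module LinearMap Filter Topology Bundle

theorem LinearMap.finrank_ker_equiv_comp_comp_equiv {R M₀ M₁ M₂ M₃ : Type*} [Ring R]
    [AddCommGroup M₀] [AddCommGroup M₁] [AddCommGroup M₂] [AddCommGroup M₃]
    [Module R M₀] [Module R M₁] [Module R M₂] [Module R M₃]
    (e₁ : M₂ ≃ₗ[R] M₃) (f : M₁ →ₗ[R] M₂) (e₀ : M₀ ≃ₗ[R] M₁) :
    finrank R (ker (e₁.toLinearMap ∘ₗ f ∘ₗ e₀.toLinearMap)) = finrank R (ker f) := by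
  rw [LinearEquiv.ker_comp, ker_comp, Submodule.comap_equiv_eq_map_symm,
    LinearEquiv.finrank_map_eq]

theorem ContinuousLinearMap.finrank_ker_inCoordinates {𝕜 B B' F F' : Type*}
    [NontriviallyNormedField 𝕜] [TopologicalSpace B] [TopologicalSpace B']
    [NormedAddCommGroup F] [NormedSpace 𝕜 F] [NormedAddCommGroup F'] [NormedSpace 𝕜 F']
    {E : B → Type*} [∀ x, AddCommGroup (E x)] [∀ x, Module 𝕜 (E x)] [∀ x, TopologicalSpace (E x)]
    [TopologicalSpace (TotalSpace F E)] [FiberBundle F E] [VectorBundle 𝕜 F E]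
    {E' : B' → Type*} [∀ x, AddCommGroup (E' x)] [∀ x, Module 𝕜 (E' x)]
    [∀ x, TopologicalSpace (E' x)] [TopologicalSpace (TotalSpace F' E')] [FiberBundle F' E']
    [VectorBundle 𝕜 F' E'] {x₀ x : B} {y₀ y : B'}
    (hx : x ∈ (trivializationAt F E x₀).baseSet) (hy : y ∈ (trivializationAt F' E' y₀).baseSet)
    (ϕ : E x →L[𝕜] E' y) :
    finrank 𝕜 (ker (inCoordinates F E F' E' x₀ x y₀ y ϕ : F →ₗ[𝕜] F')) =
      finrank 𝕜 (ker (ϕ : E x →ₗ[𝕜] E' y)) := by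
  rw [inCoordinates_eq hx hy]
  exact finrank_ker_equiv_comp_comp_equiv _ _ _

theorem ContinuousAt.eventually_finrank_ker_le {𝕜 X E F : Type*} [NontriviallyNormedField 𝕜]
    [CompleteSpace 𝕜] [TopologicalSpace X] [NormedAddCommGroup E] [NormedSpace 𝕜 E]
    [FiniteDimensional 𝕜 E] [NormedAddCommGroup F] [NormedSpace 𝕜 F]
    {ψ : X → E →L[𝕜] F} {x₀ : X} (hψ : ContinuousAt ψ x₀) :
    ∀ᶠ x in 𝓝 x₀, finrank 𝕜 (ker (ψ x : E →ₗ[𝕜] F)) ≤ finrank 𝕜 (ker (ψ x₀ : E →ₗ[𝕜] F)) := by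
  have hrank : ∀ᶠ x in 𝓝 x₀,
      (finrank 𝕜 (range (ψ x₀ : E →ₗ[𝕜] F)) : Cardinal) ≤ (ψ x : E →ₗ[𝕜] F).rank :=
    hψ.eventually ((isOpen_setOfPred_nat_le_rank _).mem_nhds
      (by simp [LinearMap.rank, finrank_eq_rank]))
  filter_upwards [hrank] with x hx
  rw [LinearMap.rank, ← finrank_eq_rank, Nat.cast_le] at hx
  have rank_nullity := finrank_range_add_finrank_ker (ψ x : E →ₗ[𝕜] F)
  have rank_nullity₀ := finrank_range_add_finrank_ker (ψ x₀ : E →ₗ[𝕜] F)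
  omega

section LocallyConstantPoints

variable {X Y : Type*} [TopologicalSpace X]

theorem isOpen_setOf_eventually_eq (f : X → Y) : IsOpen {x | ∀ᶠ y in 𝓝 x, f y = f x} := by
  refine isOpen_iff_mem_nhds.2 fun x hx => ?_
  filter_upwards [hx.eventually_nhds, hx] with y hy hyx
  exact hy.mono fun z hz => hz.trans hyx.symm

theorem dense_setOf_eventually_eq {f : X → ℕ} (hf : UpperSemicontinuous f) :
    Dense {x | ∀ᶠ y in 𝓝 x, f y = f x} := by
  refine dense_iff_inter_open.2 fun U hU ⟨x, hx⟩ => ?_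
  obtain ⟨_, ⟨x₁, hx₁, rfl⟩, hmin⟩ := wellFounded_lt.has_min (f '' U) ⟨f x, x, hx, rfl⟩
  refine ⟨x₁, hx₁, ?_⟩
  filter_upwards [hf x₁ (f x₁ + 1) (lt_add_one _), hU.mem_nhds hx₁] with y hy hyU
  have := hmin (f y) ⟨y, hyU, rfl⟩
  omega

theorem smul_mem_setOf_eventually_eq {G : Type*} [Group G] [MulAction G X]
    [ContinuousConstSMul G X] {f : X → Y} (hf : ∀ (g : G) x, f (g • x) = f x) {x : X}
    (hx : ∀ᶠ y in 𝓝 x, f y = f x) (g : G) : ∀ᶠ y in 𝓝 (g • x), f y = f (g • x) := by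
  rw [nhds_smul, ← Filter.map_smul, eventually_map]
  simpa only [hf] using hx

end LocallyConstantPoints

theorem HasMFDerivAt.comp_of_eq {𝕜 E H E' H' E'' H'' : Type*} [NontriviallyNormedField 𝕜]
    [NormedAddCommGroup E] [NormedSpace 𝕜 E] [TopologicalSpace H] {I : ModelWithCorners 𝕜 E H}
    [NormedAddCommGroup E'] [NormedSpace 𝕜 E'] [TopologicalSpace H']
    {I' : ModelWithCorners 𝕜 E' H'} [NormedAddCommGroup E''] [NormedSpace 𝕜 E'']
    [TopologicalSpace H''] {I'' : ModelWithCorners 𝕜 E'' H''} {M M' M'' : Type*}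
    [TopologicalSpace M] [ChartedSpace H M] [TopologicalSpace M'] [ChartedSpace H' M']
    [TopologicalSpace M''] [ChartedSpace H'' M''] {f : M → M'} {g : M' → M''} {x : M} {y : M'}
    {f' : TangentSpace I x →L[𝕜] TangentSpace I' (f x)}
    {g' : TangentSpace I' y →L[𝕜] TangentSpace I'' (g y)}
    (hg : HasMFDerivAt I' I'' g y g') (hf : HasMFDerivAt I I' f x f') (hy : f x = y) :
    HasMFDerivAt I I'' (g ∘ f) x (g'.comp f') := by
  subst hy
  exact hg.comp x hf

section Conj

variable {𝕜 E H : Type*} [NontriviallyNormedField 𝕜] [NormedAddCommGroup E] [NormedSpace 𝕜 E]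
  [TopologicalSpace H] (I : ModelWithCorners 𝕜 E H) (G : Type*) [TopologicalSpace G]
  [ChartedSpace H G] [Group G] (n : WithTop ℕ∞) [ContMDiffMul I n G]

def Diffeomorph.conj (g : G) : G ≃ₘ^n⟮I, I⟯ G where
  toEquiv := (MulAut.conj g).toEquiv
  contMDiff_toFun := (contMDiff_const.mul contMDiff_id).mul contMDiff_const
  contMDiff_invFun := (contMDiff_const.mul contMDiff_id).mul contMDiff_const

@[simp]
theorem Diffeomorph.conj_apply (g h : G) : Diffeomorph.conj I G n g h = g * h * g⁻¹ :=
  rfl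

end Conj

section IsotropyDim

variable {𝕜 E H E' H' : Type*} [NontriviallyNormedField 𝕜]
  [NormedAddCommGroup E] [NormedSpace 𝕜 E] [TopologicalSpace H] (I : ModelWithCorners 𝕜 E H)
  [NormedAddCommGroup E'] [NormedSpace 𝕜 E'] [TopologicalSpace H'] (I' : ModelWithCorners 𝕜 E' H')
  (G : Type*) [TopologicalSpace G] [ChartedSpace H G] [Group G]
  {M : Type*} [TopologicalSpace M] [ChartedSpace H' M] [MulAction G M]

/-- `dim G_m`, computed as the dimension of the isotropy Lie algebra. -/
noncomputable def isotropyDim (m : M) : ℕ :=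
  finrank 𝕜 (ker (mfderiv I I' (fun g : G => g • m) 1).toLinearMap)

variable {I I' G}

theorem isotropyDim_smul [ContMDiffMul I (1 : WithTop ℕ∞) G]
    [ContMDiffSMul I I' (1 : WithTop ℕ∞) G M] (g : G) (m : M) :
    isotropyDim I I' G (g • m) = isotropyDim I I' G m := by
  let L : M ≃ₘ^1⟮I', I'⟯ M := Diffeomorph.smul I I' 1 g
  let c := Diffeomorph.conj I G 1 g⁻¹
  have horbit : (fun h : G => h • (g • m)) = L ∘ (fun h : G => h • m) ∘ c := by
    ext h
    simp [L, c, smul_smul, mul_assoc]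
  have hc : c 1 = 1 := by simp [c]
  have hD : mfderiv I I' (fun h : G => h • (g • m)) 1 =
      (mfderiv I' I' L m).comp ((mfderiv I I' (fun h : G => h • m) 1).comp (mfderiv I I c 1)) := by
    have horb : MDifferentiableAt I I' (fun h : G => h • m) 1 :=
      (contMDiff_id.smul contMDiff_const).mdifferentiableAt one_ne_zero
    rw [horbit]
    exact ((L.mdifferentiable one_ne_zero m).hasMFDerivAt.comp_of_eq
      (horb.hasMFDerivAt.comp_of_eq (f := c) (c.mdifferentiable one_ne_zero 1).hasMFDerivAt hc)
      (by simp [hc])).mfderiv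
  rw [isotropyDim, isotropyDim, hD]
  exact finrank_ker_equiv_comp_comp_equiv
    (L.mfderivToContinuousLinearEquiv one_ne_zero m).toLinearEquiv _
    (c.mfderivToContinuousLinearEquiv one_ne_zero 1).toLinearEquiv

theorem upperSemicontinuous_isotropyDim [CompleteSpace 𝕜] [FiniteDimensional 𝕜 E]
    [IsManifold I (1 : WithTop ℕ∞) G] [IsManifold I' (1 : WithTop ℕ∞) M]
    [ContMDiffSMul I I' (1 : WithTop ℕ∞) G M] :
    UpperSemicontinuous (isotropyDim I I' G : M → ℕ) := by
  intro m₀ k hk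
  let T := inTangentCoordinates I I' (fun _ : M => (1 : G)) (fun m => (1 : G) • m)
    (fun m => mfderiv I I' (fun h : G => h • m) 1) m₀
  have hT : ContinuousAt T m₀ :=
    (ContMDiffAt.mfderiv (m := 0) (n := 1) (fun (m : M) (h : G) => h • m) (fun _ => 1)
      (contMDiff_snd.smul contMDiff_fst).contMDiffAt
      contMDiffAt_const (by simp)).continuousAt
  have hchart : ∀ᶠ m in 𝓝 m₀, (1 : G) • m ∈ (chartAt H' ((1 : G) • m₀)).source := by
    simpa only [one_smul] using (chartAt H' m₀).open_source.eventually_mem (mem_chart_source H' m₀)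
  have hker : ∀ m, (1 : G) • m ∈ (chartAt H' ((1 : G) • m₀)).source →
      finrank 𝕜 (ker (T m : E →ₗ[𝕜] E')) = isotropyDim I I' G m := fun m hm =>
    ContinuousLinearMap.finrank_ker_inCoordinates
      (FiberBundle.mem_baseSet_trivializationAt' (1 : G)) hm _
  filter_upwards [hT.eventually_finrank_ker_le, hchart] with m hm hmchart
  rw [← hker m hmchart]
  rw [← hker m₀ (mem_chart_source H' _)] at hk
  exact hm.trans_lt hk

end IsotropyDim

theorem regular_points_invariant_open_dense_general
    {E : Type*} [NormedAddCommGroup E] [NormedSpace ℝ E] [FiniteDimensional ℝ E]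
    {F : Type*} [NormedAddCommGroup F] [NormedSpace ℝ F]
    {G : Type*} [TopologicalSpace G] [ChartedSpace E G] [Group G]
    {I : ModelWithCorners ℝ E E} [LieGroup I (⊤ : ℕ∞) G]
    {M : Type*} [TopologicalSpace M] [ChartedSpace F M]
    {J : ModelWithCorners ℝ F F} [IsManifold J (⊤ : ℕ∞) M]
    [MulAction G M]
    (hρ : ContMDiff (I.prod J) J (⊤ : ℕ∞) fun p : G × M => p.1 • p.2)
    (isoDim : M → ℕ)
    (hdim : ∀ m : M, isoDim m =
      Module.finrank ℝ (LinearMap.ker (mfderiv I J (fun h : G => h • m) (1 : G)).toLinearMap))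
    (R : Set M)
    (hR : R = {m₀ : M | ∀ᶠ m in nhds m₀, isoDim m = isoDim m₀}) :
    (∀ m ∈ R, ∀ g : G, g • m ∈ R) ∧ IsOpen R ∧ Dense R := by
  have : ContMDiffSMul I J (⊤ : ℕ∞) G M := ⟨hρ⟩
  have : ContinuousSMul G M := ContMDiffSMul.continuousSMul (I := I) (I' := J) (⊤ : ℕ∞)
  obtain rfl : isoDim = isotropyDim I J G := funext hdim
  subst hR
  exact ⟨fun m hm g => smul_mem_setOf_eventually_eq isotropyDim_smul hm g,
    isOpen_setOf_eventually_eq _, dense_setOf_eventually_eq upperSemicontinuous_isotropyDim⟩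

/-- The set of `ρ`-regular points of a smooth Lie group action
`ρ : G × M → M` (written `g • m`) is a `G`-invariant, open, dense subset of `M`.
A point `m₀` is `ρ`-regular when the isotropy dimension `dim G_m` is constant for `m`
in a neighborhood of `m₀`, where `dim G_m` is encoded as the dimension of the isotropy
Lie algebra `𝔤_m = Ker (ρ_m)_{*,e}`. -/
theorem regular_points_invariant_open_dense
    {E : Type*} [NormedAddCommGroup E] [NormedSpace ℝ E] [FiniteDimensional ℝ E]
    {F : Type*} [NormedAddCommGroup F] [NormedSpace ℝ F] [FiniteDimensional ℝ F]
    {G : Type*} [TopologicalSpace G] [ChartedSpace E G] [Group G]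
    {I : ModelWithCorners ℝ E E} [LieGroup I (⊤ : ℕ∞) G]
    {M : Type*} [TopologicalSpace M] [ChartedSpace F M]
    {J : ModelWithCorners ℝ F F} [IsManifold J (⊤ : ℕ∞) M]
    [MulAction G M]
    (hρ : ContMDiff (I.prod J) J (⊤ : ℕ∞) fun p : G × M => p.1 • p.2)
    (isoDim : M → ℕ)
    (hdim : ∀ m : M, isoDim m =
      Module.finrank ℝ (LinearMap.ker (mfderiv I J (fun h : G => h • m) (1 : G)).toLinearMap))
    (R : Set M)
    (hR : R = {m₀ : M | ∀ᶠ m in nhds m₀, isoDim m = isoDim m₀}) :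
    (∀ m ∈ R, ∀ g : G, g • m ∈ R) ∧ IsOpen R ∧ Dense R :=
  regular_points_invariant_open_dense_general hρ isoDim hdim R hR
end

section
/- Let X be a vector field on M of the form X(m) = (ρ_m)_{*,e}(η(m)) for a smooth map η : M → 𝔤. Then X is G-invariant (i.e. (ρ_g)_* ∘ X = X ∘ ρ_g for all g) if and only if for all g ∈ G and m ∈ M, η(ρ_g(m)) − Ad_g(η(m)) ∈ 𝔤_{ρ_g(m)}. -/
/-!
Differentiating `g • (h • m) = (g h g⁻¹) • (g • m)` at `h = e` gives
`(ρ_g)_* ∘ (ρ_m)_{*,e} = (ρ_{g • m})_{*,e} ∘ Ad_g`. Hence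
`(ρ_g)_* X(m) = (ρ_{g • m})_{*,e} (Ad_g η(m))`, and this equals
`X(g • m) = (ρ_{g • m})_{*,e} η(g • m)` exactly when `η(g • m) - Ad_g η(m)` lies in the
kernel `𝔤_{g • m}` of `(ρ_{g • m})_{*,e}`.
-/

open Manifold

theorem smul_comp_orbit_eq_orbit_comp_conj {G M : Type*} [Group G] [MulAction G M]
    (g : G) (m : M) :
    ((fun x : M => g • x) ∘ fun h : G => h • m) =
      (fun h : G => h • (g • m)) ∘ fun h : G => g * h * g⁻¹ := by
  funext h
  simp [smul_smul]

section OrbitMap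

variable {𝕜 : Type*} [NontriviallyNormedField 𝕜]
  {E : Type*} [NormedAddCommGroup E] [NormedSpace 𝕜 E] {H : Type*} [TopologicalSpace H]
  {I : ModelWithCorners 𝕜 E H} {G : Type*} [TopologicalSpace G] [ChartedSpace H G] [Group G]
  {F : Type*} [NormedAddCommGroup F] [NormedSpace 𝕜 F] {H' : Type*} [TopologicalSpace H']
  {J : ModelWithCorners 𝕜 F H'} {M : Type*} [TopologicalSpace M] [ChartedSpace H' M]
  [MulAction G M]

theorem mdifferentiableAt_conj [ContMDiffMul I 1 G] (g h : G) :
    MDifferentiableAt I I (fun k : G => g * k * g⁻¹) h :=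
  mdifferentiableAt_mul_right.comp h mdifferentiableAt_mul_left

theorem mdifferentiable_smul_const_of_action
    (hρ : MDifferentiable (I.prod J) J fun p : G × M => p.1 • p.2) (m : M) :
    MDifferentiable I J fun h : G => h • m :=
  hρ.comp (mdifferentiable_id.prodMk mdifferentiable_const)

theorem mdifferentiable_const_smul_of_action
    (hρ : MDifferentiable (I.prod J) J fun p : G × M => p.1 • p.2) (g : G) :
    MDifferentiable J J fun x : M => g • x :=
  hρ.comp (mdifferentiable_const.prodMk mdifferentiable_id)

theorem mfderiv_const_smul_mfderiv_orbit [ContMDiffMul I 1 G]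
    (hρ : MDifferentiable (I.prod J) J fun p : G × M => p.1 • p.2) (g : G) (m : M)
    (v : TangentSpace I (1 : G)) :
    mfderiv J J (fun x : M => g • x) m (mfderiv I J (fun h : G => h • m) 1 v) =
      mfderiv I J (fun h : G => h • (g • m)) 1
        (mfderiv I I (fun h : G => g * h * g⁻¹) 1 v) := by
  have hconj : g * 1 * g⁻¹ = 1 := by group
  rw [← mfderiv_comp_apply_of_eq 1 (mdifferentiable_smul_const_of_action hρ (g • m) 1)
      (mdifferentiableAt_conj g 1) hconj, ← smul_comp_orbit_eq_orbit_comp_conj,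
    mfderiv_comp_apply 1 (mdifferentiable_const_smul_of_action hρ g _)
      (mdifferentiable_smul_const_of_action hρ m 1), one_smul]

end OrbitMap

theorem invariant_vertical_field_iff_Ad_equivariant_up_to_isotropy_general
    {E : Type*} [NormedAddCommGroup E] [NormedSpace ℝ E]
    {F : Type*} [NormedAddCommGroup F] [NormedSpace ℝ F]
    {G : Type*} [TopologicalSpace G] [ChartedSpace E G] [Group G]
    {I : ModelWithCorners ℝ E E} [LieGroup I (⊤ : ℕ∞) G]
    {M : Type*} [TopologicalSpace M] [ChartedSpace F M]
    {J : ModelWithCorners ℝ F F}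
    [MulAction G M]
    (hρ : ContMDiff (I.prod J) J (⊤ : ℕ∞) fun p : G × M => p.1 • p.2)
    (η : M → E)
    (X : ∀ m : M, TangentSpace J m)
    (hX : ∀ m : M, X m = mfderiv I J (fun g : G => g • m) (1 : G) (η m))
    -- the adjoint representation: `Ad g` is the differential at `e` of conjugation by `g`:
    (Ad : G → E →L[ℝ] E)
    (hAd : ∀ g : G, Ad g = mfderiv I I (fun h : G => g * h * g⁻¹) (1 : G)) :
    (∀ (g : G) (m : M), mfderiv J J (fun x : M => g • x) m (X m) = X (g • m)) ↔
      (∀ (g : G) (m : M),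
        η (g • m) - Ad g (η m)
          ∈ (LinearMap.ker (ContinuousLinearMap.toLinearMap (M := E) (M₂ := F)
              (mfderiv I J (fun h : G => h • (g • m)) (1 : G))) :
              Submodule ℝ E)) := by
  have hρ' := hρ.mdifferentiable (by simp)
  have translate_X : ∀ (g : G) (m : M), mfderiv J J (fun x : M => g • x) m (X m) =
      mfderiv I J (fun h : G => h • (g • m)) 1 (Ad g (η m)) := fun g m => by
    rw [hX, hAd]
    exact mfderiv_const_smul_mfderiv_orbit hρ' g m (η m)
  refine forall₂_congr fun g m => ?_
  rw [translate_X, hX]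
  exact (LinearMap.sub_mem_ker_iff.trans eq_comm).symm

/-- Let `X` be a vector field on `M` of the form
`X(m) = (ρ_m)_{*,e}(η(m))` for a smooth map `η : M → 𝔤`.  Then `X` is `G`-invariant
(i.e. `(ρ_g)_* ∘ X = X ∘ ρ_g` for all `g`) if and only if for all `g ∈ G` and `m ∈ M`,
`η(ρ_g(m)) − Ad_g(η(m)) ∈ 𝔤_{ρ_g(m)}`, where `Ad_g` is the differential at the identity
of conjugation by `g` and `𝔤_m = Ker (ρ_m)_{*,e}`. -/
theorem invariant_vertical_field_iff_Ad_equivariant_up_to_isotropy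
    {E : Type*} [NormedAddCommGroup E] [NormedSpace ℝ E] [FiniteDimensional ℝ E]
    {F : Type*} [NormedAddCommGroup F] [NormedSpace ℝ F] [FiniteDimensional ℝ F]
    {G : Type*} [TopologicalSpace G] [ChartedSpace E G] [Group G]
    {I : ModelWithCorners ℝ E E} [LieGroup I (⊤ : ℕ∞) G]
    {M : Type*} [TopologicalSpace M] [ChartedSpace F M]
    {J : ModelWithCorners ℝ F F} [IsManifold J (⊤ : ℕ∞) M]
    [MulAction G M]
    (hρ : ContMDiff (I.prod J) J (⊤ : ℕ∞) fun p : G × M => p.1 • p.2)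
    (η : M → E) (hη : ContMDiff J 𝓘(ℝ, E) (⊤ : ℕ∞) η)
    (X : ∀ m : M, TangentSpace J m)
    (hX : ∀ m : M, X m = mfderiv I J (fun g : G => g • m) (1 : G) (η m))
    -- the adjoint representation: `Ad g` is the differential at `e` of conjugation by `g`:
    (Ad : G → E →L[ℝ] E)
    (hAd : ∀ g : G, Ad g = mfderiv I I (fun h : G => g * h * g⁻¹) (1 : G)) :
    (∀ (g : G) (m : M), mfderiv J J (fun x : M => g • x) m (X m) = X (g • m)) ↔
      (∀ (g : G) (m : M),
        η (g • m) - Ad g (η m)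
          ∈ (LinearMap.ker (ContinuousLinearMap.toLinearMap (M := E) (M₂ := F)
              (mfderiv I J (fun h : G => h • (g • m)) (1 : G))) :
              Submodule ℝ E)) :=
  invariant_vertical_field_iff_Ad_equivariant_up_to_isotropy_general hρ η X hX Ad hAd
end

section
/- Let (M, ω) be a symplectic manifold, ρ a symplectic G-action with Ad*-equivariant momentum map K : M → 𝔤*, and φ : 𝔤* → 𝔤 an equivariant map (Ad_g φ(α) = φ(Ad*_g α) for all g, α). Then the vector field X = ω^♯ ∘ K*φ, i.e. X(m) = ω_m^♯(K_m^*(φ(K(m)))), is G-invariant: (ρ_g)_{*,m}(X(m)) = X(ρ_g(m)) for all g ∈ G, m ∈ M. -/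
open Manifold

/-!
The field `X` is the fundamental vector field of the `𝔤`-valued function `ξ = φ ∘ K`: the
momentum map property gives `ω_m(X(m), v) = ω_m((ρ_m)_{*,e} ξ(m), v)`, so by nondegeneracy
`X(m) = (ρ_m)_{*,e} ξ(m)`. Differentiating `h ↦ (g h g⁻¹) • (g • m) = g • (h • m)` at `e` shows
`(ρ_g)_* ∘ (ρ_m)_{*,e} = (ρ_{g•m})_{*,e} ∘ Ad_g`, and `Ad_g ξ(m) = ξ(g • m)` by the two
equivariance hypotheses.
-/

theorem ContinuousLinearMap.eq_of_forall_apply_eq_of_nondegenerate {𝕜 V W P : Type*}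
    [NormedField 𝕜] [TopologicalSpace V] [AddCommGroup V] [Module 𝕜 V]
    [TopologicalSpace W] [AddCommGroup W] [Module 𝕜 W]
    [TopologicalSpace P] [AddCommGroup P] [Module 𝕜 P] [IsTopologicalAddGroup P]
    [ContinuousConstSMul 𝕜 P]
    (B : V →L[𝕜] W →L[𝕜] P) (hB : ∀ v, (∀ w, B v w = 0) → v = 0) {x y : V}
    (h : ∀ w, B x w = B y w) : x = y :=
  sub_eq_zero.mp <| hB _ fun w => by simp [h w]

section OrbitMap

variable {𝕜 : Type*} [NontriviallyNormedField 𝕜]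
  {E H : Type*} [NormedAddCommGroup E] [NormedSpace 𝕜 E] [TopologicalSpace H]
  {I : ModelWithCorners 𝕜 E H} {G : Type*} [TopologicalSpace G] [ChartedSpace H G] [Group G]
  {F H' : Type*} [NormedAddCommGroup F] [NormedSpace 𝕜 F] [TopologicalSpace H']
  {J : ModelWithCorners 𝕜 F H'} {M : Type*} [TopologicalSpace M] [ChartedSpace H' M]
  [MulAction G M]

theorem mfderiv_smul_orbit_eq_orbit_conj {n : WithTop ℕ∞} [ContMDiffMul I n G] (hn : n ≠ 0)
    (hρ : ContMDiff (I.prod J) J n fun p : G × M => p.1 • p.2) (g : G) (m : M)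
    (η : TangentSpace I (1 : G)) :
    mfderiv J J (fun x : M => g • x) m (mfderiv I J (fun h : G => h • m) 1 η) =
      mfderiv I J (fun h : G => h • (g • m)) 1 (mfderiv I I (fun h : G => g * h * g⁻¹) 1 η) := by
  have hsmul : MDifferentiable J J fun x : M => g • x :=
    (hρ.comp (contMDiff_const.prodMk contMDiff_id)).mdifferentiable hn
  have horbit : ∀ m : M, MDifferentiable I J fun h : G => h • m := fun m =>
    (hρ.comp (contMDiff_id.prodMk contMDiff_const)).mdifferentiable hn
  have hconj : MDifferentiable I I fun h : G => g * h * g⁻¹ :=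
    (contMDiff_mul_right.comp contMDiff_mul_left).mdifferentiable hn
  have hcomm : (fun h : G => h • (g • m)) ∘ (fun h : G => g * h * g⁻¹) =
      (fun x : M => g • x) ∘ fun h : G => h • m := by
    funext h
    simp [mul_smul]
  rw [← mfderiv_comp_apply_of_eq 1 (hsmul _) (horbit m _) (one_smul G m),
    ← mfderiv_comp_apply_of_eq 1 (horbit _ _) (hconj _) (by simp), hcomm]

end OrbitMap

theorem momentum_casimir_field_invariant_general
    {E : Type*} [NormedAddCommGroup E] [NormedSpace ℝ E]
    {F : Type*} [NormedAddCommGroup F] [NormedSpace ℝ F]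
    {G : Type*} [TopologicalSpace G] [ChartedSpace E G] [Group G]
    {I : ModelWithCorners ℝ E E} [LieGroup I (⊤ : ℕ∞) G]
    {M : Type*} [TopologicalSpace M] [ChartedSpace F M]
    {J : ModelWithCorners ℝ F F}
    [MulAction G M]
    (hρ : ContMDiff (I.prod J) J (⊤ : ℕ∞) fun p : G × M => p.1 • p.2)
    -- the symplectic form:
    (ω : ∀ m : M, TangentSpace J m →L[ℝ] TangentSpace J m →L[ℝ] ℝ)
    (hω_nd : ∀ (m : M) (v : TangentSpace J m), (∀ w, ω m v w = 0) → v = 0)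
    -- the differential at `e` of the orbit map `ρ_m : g ↦ g • m`:
    (dρ : ∀ m : M, E →L[ℝ] TangentSpace J m)
    (hdρ : ∀ m : M, dρ m = mfderiv I J (fun g : G => g • m) (1 : G))
    -- the adjoint representation `Ad g = (conj g)_{*,e}`:
    (Ad : G → E →L[ℝ] E)
    (hAd : ∀ g : G, Ad g = mfderiv I I (fun h : G => g * h * g⁻¹) (1 : G))
    -- the momentum map `K : M → 𝔤*`:
    (K : M → E →L[ℝ] ℝ)
    -- the differential of `K` at `m`:
    (dK : ∀ m : M, TangentSpace J m →L[ℝ] E →L[ℝ] ℝ)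
    (hK_mom : ∀ (m : M) (v : TangentSpace J m) (η : E),
      dK m v η = ω m (dρ m η) v)
    -- `Ad*`-equivariance of `K`:
    (hK_equiv : ∀ (g : G) (m : M), K (g • m) = (K m).comp (Ad g⁻¹))
    -- the equivariant map `φ : 𝔤* → 𝔤`:
    (φ : (E →L[ℝ] ℝ) → E)
    (hφ : ∀ (g : G) (α : E →L[ℝ] ℝ), Ad g (φ α) = φ (α.comp (Ad g⁻¹)))
    -- the vector field `X = ω^♯ ∘ K^*φ`:
    (X : ∀ m : M, TangentSpace J m)
    (hX : ∀ (m : M) (v : TangentSpace J m),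
      ω m (X m) v = dK m v (φ (K m))) :
    ∀ (g : G) (m : M), mfderiv J J (fun x : M => g • x) m (X m) = X (g • m) := by
  have hX_fundamental : ∀ m, X m = dρ m (φ (K m)) := fun m =>
    (ω m).eq_of_forall_apply_eq_of_nondegenerate (hω_nd m) fun v => (hX m v).trans (hK_mom m v _)
  intro g m
  rw [hX_fundamental, hX_fundamental, hK_equiv, ← hφ, hdρ, hdρ, hAd]
  exact mfderiv_smul_orbit_eq_orbit_conj (by simp) hρ g m _

/-- Let `(M, ω)` be a symplectic manifold, `ρ` a symplectic `G`-action
(written `g • m`) with `Ad*`-equivariant momentum map `K : M → 𝔤*`, and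
`φ : 𝔤* → 𝔤` an equivariant map (`Ad_g φ(α) = φ(Ad*_g α)`).  Then the vector field
`X = ω^♯ ∘ K^*φ` — characterized by `ω_m(X(m), v) = ⟨K_{*,m}(v), φ(K(m))⟩` — is
`G`-invariant: `(ρ_g)_{*,m}(X(m)) = X(ρ_g(m))` for all `g ∈ G`, `m ∈ M`. -/
theorem momentum_casimir_field_invariant
    {E : Type*} [NormedAddCommGroup E] [NormedSpace ℝ E] [FiniteDimensional ℝ E]
    {F : Type*} [NormedAddCommGroup F] [NormedSpace ℝ F] [FiniteDimensional ℝ F]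
    {G : Type*} [TopologicalSpace G] [ChartedSpace E G] [Group G]
    {I : ModelWithCorners ℝ E E} [LieGroup I (⊤ : ℕ∞) G]
    {M : Type*} [TopologicalSpace M] [ChartedSpace F M]
    {J : ModelWithCorners ℝ F F} [IsManifold J (⊤ : ℕ∞) M]
    [MulAction G M]
    (hρ : ContMDiff (I.prod J) J (⊤ : ℕ∞) fun p : G × M => p.1 • p.2)
    -- the symplectic form:
    (ω : ∀ m : M, TangentSpace J m →L[ℝ] TangentSpace J m →L[ℝ] ℝ)
    (hω_alt : ∀ (m : M) (v : TangentSpace J m), ω m v v = 0)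
    (hω_nd : ∀ (m : M) (v : TangentSpace J m), (∀ w, ω m v w = 0) → v = 0)
    -- the differential at `e` of the orbit map `ρ_m : g ↦ g • m`:
    (dρ : ∀ m : M, E →L[ℝ] TangentSpace J m)
    (hdρ : ∀ m : M, dρ m = mfderiv I J (fun g : G => g • m) (1 : G))
    -- the adjoint representation `Ad g = (conj g)_{*,e}`:
    (Ad : G → E →L[ℝ] E)
    (hAd : ∀ g : G, Ad g = mfderiv I I (fun h : G => g * h * g⁻¹) (1 : G))
    -- the action is symplectic:
    (hsymp : ∀ (g : G) (m : M) (v w : TangentSpace J m),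
      ω (g • m) (mfderiv J J (fun x : M => g • x) m v) (mfderiv J J (fun x : M => g • x) m w)
        = ω m v w)
    -- the momentum map `K : M → 𝔤*`:
    (K : M → E →L[ℝ] ℝ) (hK_smooth : ContMDiff J 𝓘(ℝ, E →L[ℝ] ℝ) (⊤ : ℕ∞) K)
    -- the differential of `K` at `m`:
    (dK : ∀ m : M, TangentSpace J m →L[ℝ] E →L[ℝ] ℝ)
    (hdK : ∀ m : M, dK m = mfderiv J 𝓘(ℝ, E →L[ℝ] ℝ) K m)
    (hK_mom : ∀ (m : M) (v : TangentSpace J m) (η : E),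
      dK m v η = ω m (dρ m η) v)
    -- `Ad*`-equivariance of `K`:
    (hK_equiv : ∀ (g : G) (m : M), K (g • m) = (K m).comp (Ad g⁻¹))
    -- the equivariant map `φ : 𝔤* → 𝔤`:
    (φ : (E →L[ℝ] ℝ) → E)
    (hφ : ∀ (g : G) (α : E →L[ℝ] ℝ), Ad g (φ α) = φ (α.comp (Ad g⁻¹)))
    -- the vector field `X = ω^♯ ∘ K^*φ`:
    (X : ∀ m : M, TangentSpace J m)
    (hX : ∀ (m : M) (v : TangentSpace J m),
      ω m (X m) v = dK m v (φ (K m))) :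
    ∀ (g : G) (m : M), mfderiv J J (fun x : M => g • x) m (X m) = X (g • m) :=
  momentum_casimir_field_invariant_general hρ ω hω_nd dρ hdρ Ad hAd K dK hK_mom hK_equiv φ hφ X hX
end

section
/- Let ξ be an element of the Heisenberg Lie algebra 𝔥(1,1), written ξ = a¹ξ₁ + a²ξ₂ + a³ξ₃. Then ad_ξ(𝔥(1,1))⁰ ∩ R_{Ad*} = R_{Ad*} if a¹ = a² = 0, and ad_ξ(𝔥(1,1))⁰ ∩ R_{Ad*} = ∅ if (a¹, a²) ≠ (0,0); in particular the set {ξ ∈ 𝔥(1,1) : ad_ξ(𝔥(1,1))⁰ ∩ R_{Ad*} ≠ ∅} is not dense in 𝔥(1,1). -/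
/-!
In the basis `b`, the bracket of `𝔥(1,1)` is `⁅ξ, η⁆ = (ξ₁η₂ - ξ₂η₁) • ξ₃`. So for a regular
covector `α` (i.e. `α ξ₃ ≠ 0`) the functional `α ∘ ad_ξ` is `(ξ₁η₂ - ξ₂η₁) α(ξ₃)`, which vanishes
identically exactly when `ξ₁ = ξ₂ = 0`. Hence the set of `ξ` whose annihilator meets the regular
set lies in the hyperplane `ξ₁ = 0` (that is, `b.coord 0 = 0`), which is closed and proper.
-/

section Heisenberg

variable {R L : Type*} [CommRing R] [LieRing L] [LieAlgebra R L] (b : Module.Basis (Fin 3) R L)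

theorem lie_eq_coord_smul (h01 : ⁅b 0, b 1⁆ = b 2) (h02 : ⁅b 0, b 2⁆ = 0) (h12 : ⁅b 1, b 2⁆ = 0)
    (ξ η : L) :
    ⁅ξ, η⁆ = (b.coord 0 ξ * b.coord 1 η - b.coord 1 ξ * b.coord 0 η) • b 2 := by
  have h10 : ⁅b 1, b 0⁆ = -b 2 := by rw [← lie_skew, h01]
  have h20 : ⁅b 2, b 0⁆ = 0 := by rw [← lie_skew, h02, neg_zero]
  have h21 : ⁅b 2, b 1⁆ = 0 := by rw [← lie_skew, h12, neg_zero]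
  conv_lhs => rw [← b.sum_repr ξ, ← b.sum_repr η]
  simp only [Fin.sum_univ_three, add_lie, lie_add, smul_lie, lie_smul, lie_self, h01, h02, h12,
    h10, h20, h21, Module.Basis.coord_apply]
  module

theorem forall_dual_lie_eq_zero_iff [NoZeroDivisors R] (h01 : ⁅b 0, b 1⁆ = b 2)
    (h02 : ⁅b 0, b 2⁆ = 0) (h12 : ⁅b 1, b 2⁆ = 0) {α : Module.Dual R L} (hα : α (b 2) ≠ 0) (ξ : L) :
    (∀ η, α ⁅ξ, η⁆ = 0) ↔ b.coord 0 ξ = 0 ∧ b.coord 1 ξ = 0 := by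
  simp only [lie_eq_coord_smul b h01 h02 h12, map_smul, smul_eq_mul, mul_eq_zero, hα, or_false]
  refine ⟨fun h => ⟨?_, ?_⟩, fun ⟨h0, h1⟩ η => by simp [h0, h1]⟩
  · simpa using h (b 1)
  · simpa using h (b 0)

end Heisenberg

/-- Let `ξ = a¹ξ₁ + a²ξ₂ + a³ξ₃` be an element of the Heisenberg Lie
algebra `𝔥(1,1)` (basis `ξ₁, ξ₂, ξ₃`, only nonzero bracket `[ξ₁,ξ₂] = ξ₃`).  With
`R_{Ad*} = {α ∈ 𝔥(1,1)* : α(ξ₃) ≠ 0}` the set of coadjoint-regular points and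
`ad_ξ(𝔥(1,1))⁰ = {α : α([ξ,η]) = 0 ∀ η}` the annihilator of the image of `ad_ξ`, we
have `ad_ξ(𝔥(1,1))⁰ ∩ R_{Ad*} = R_{Ad*}` if `a¹ = a² = 0`, and
`ad_ξ(𝔥(1,1))⁰ ∩ R_{Ad*} = ∅` if `(a¹,a²) ≠ (0,0)`; in particular the set
`{ξ : ad_ξ(𝔥(1,1))⁰ ∩ R_{Ad*} ≠ ∅}` is not dense in `𝔥(1,1)`. -/
theorem heisenberg_annihilator_regular_not_dense
    {L : Type*} [LieRing L] [LieAlgebra ℝ L]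
    [TopologicalSpace L] [IsTopologicalAddGroup L] [ContinuousSMul ℝ L] [T2Space L]
    (b : Module.Basis (Fin 3) ℝ L)
    (h01 : ⁅b 0, b 1⁆ = b 2) (h02 : ⁅b 0, b 2⁆ = 0) (h12 : ⁅b 1, b 2⁆ = 0)
    -- the annihilator of `ad_ξ(𝔥(1,1))` and the coadjoint-regular set:
    (ann : L → Set (Module.Dual ℝ L))
    (hann : ∀ ξ : L, ann ξ = {α : Module.Dual ℝ L | ∀ η : L, α ⁅ξ, η⁆ = 0})
    (R : Set (Module.Dual ℝ L))
    (hR : R = {α : Module.Dual ℝ L | α (b 2) ≠ 0}) :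
    (∀ a : Fin 3 → ℝ, a 0 = 0 ∧ a 1 = 0 →
      ann (a 0 • b 0 + a 1 • b 1 + a 2 • b 2) ∩ R = R) ∧
    (∀ a : Fin 3 → ℝ, ¬ (a 0 = 0 ∧ a 1 = 0) →
      ann (a 0 • b 0 + a 1 • b 1 + a 2 • b 2) ∩ R = ∅) ∧
    ¬ Dense {ξ : L | (ann ξ ∩ R).Nonempty} := by
  have mem_ann_iff : ∀ ξ, ∀ α ∈ R, α ∈ ann ξ ↔ b.coord 0 ξ = 0 ∧ b.coord 1 ξ = 0 := by
    intro ξ α hα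
    subst hR
    rw [hann]
    exact forall_dual_lie_eq_zero_iff b h01 h02 h12 hα ξ
  have coord_eq : ∀ (a : Fin 3 → ℝ) i, b.coord i (a 0 • b 0 + a 1 • b 1 + a 2 • b 2) = a i := by
    intro a i
    fin_cases i <;> simp
  refine ⟨fun a ha => ?_, fun a ha => ?_, ?_⟩
  · exact Set.inter_eq_right.2 fun α hα => (mem_ann_iff _ α hα).2 (by simpa [coord_eq] using ha)
  · refine Set.eq_empty_of_forall_notMem fun α ⟨hα_ann, hα⟩ => ha ?_
    simpa [coord_eq] using (mem_ann_iff _ α hα).1 hα_ann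
  · have : FiniteDimensional ℝ L := Module.Finite.of_basis b
    have hyperplane_closed : IsClosed {ξ : L | b.coord 0 ξ = 0} :=
      isClosed_eq (b.coord 0).continuous_of_finiteDimensional continuous_const
    have subset_hyperplane : {ξ : L | (ann ξ ∩ R).Nonempty} ⊆ {ξ | b.coord 0 ξ = 0} :=
      fun ξ ⟨α, hα_ann, hα⟩ => ((mem_ann_iff ξ α hα).1 hα_ann).1
    intro hdense
    simpa using hyperplane_closed.closure_subset_iff.2 subset_hyperplane (hdense (b 0))
end

section
/- Let ρ : G × M → M be a smooth action, m₀ a point with isotropy algebra 𝔤_{m₀}, and suppose X is G-invariant with X(s(λ)) = (σ_λ)_{*,e}(η_λ) where σ_λ = ρ_{s(λ)}. Then for any χ ∈ 𝔤_{s(λ)} and g₀ ∈ G, the curve Γ(t) = ρ(g₀ exp((η_λ + χ) t), s(λ)) is an integral curve of X with Γ(0) = ρ(g₀, s(λ)). -/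
/-!
Because `c` is a homomorphism, `Γ (t + s) = (g₀ * c t) • (c s • p)`, so it suffices to show that
for every `g` the curve `s ↦ g • (c s • p)` has velocity `X (g • p)` at `s = 0`. By the chain rule
this velocity is `(g • ·)_* σ_* (η + χ)` with `σ = (· • p)`. The differential `σ_*` kills `χ`, since
`σ` is constant along a curve in the stabiliser of `p` tangent to `χ`; hence the velocity is
`(g • ·)_* X p = X (g • p)` by invariance of `X`.
-/

open Manifold

section Velocity

variable {E : Type*} [NormedAddCommGroup E] [NormedSpace ℝ E]
  {H : Type*} [TopologicalSpace H] {I : ModelWithCorners ℝ E H}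
  {M : Type*} [TopologicalSpace M] [ChartedSpace H M]
  {E' : Type*} [NormedAddCommGroup E'] [NormedSpace ℝ E']
  {H' : Type*} [TopologicalSpace H'] {I' : ModelWithCorners ℝ E' H'}
  {N : Type*} [TopologicalSpace N] [ChartedSpace H' N]
  {γ : ℝ → M} {t : ℝ} {v : TangentSpace I (γ t)}

theorem MDifferentiableAt.hasMFDerivAt_smulRight (hγ : MDifferentiableAt 𝓘(ℝ, ℝ) I γ t) :
    HasMFDerivAt 𝓘(ℝ, ℝ) I γ t ((1 : ℝ →L[ℝ] ℝ).smulRight (mfderiv 𝓘(ℝ, ℝ) I γ t (1 : ℝ))) := by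
  have h : (1 : ℝ →L[ℝ] ℝ).smulRight (mfderiv 𝓘(ℝ, ℝ) I γ t (1 : ℝ)) = mfderiv 𝓘(ℝ, ℝ) I γ t := by
    ext1; simp; rfl
  rw [h]
  exact hγ.hasMFDerivAt

theorem HasMFDerivAt.comp_smulRight {f : M → N} {y : M}
    {f' : TangentSpace I y →L[ℝ] TangentSpace I' (f y)} (hf : HasMFDerivAt I I' f y f')
    (hγ : HasMFDerivAt 𝓘(ℝ, ℝ) I γ t ((1 : ℝ →L[ℝ] ℝ).smulRight v)) (hy : γ t = y) :
    HasMFDerivAt 𝓘(ℝ, ℝ) I' (f ∘ γ) t ((1 : ℝ →L[ℝ] ℝ).smulRight (f' v)) := by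
  subst hy
  have h : f'.comp ((1 : ℝ →L[ℝ] ℝ).smulRight v) = (1 : ℝ →L[ℝ] ℝ).smulRight (f' v) := by
    ext1; simp
  exact h ▸ hf.comp t hγ

theorem HasMFDerivAt.apply_eq_zero_of_comp_const {f : M → N}
    {f' : TangentSpace I (γ t) →L[ℝ] TangentSpace I' (f (γ t))} {y : N}
    (hf : HasMFDerivAt I I' f (γ t) f')
    (hγ : HasMFDerivAt 𝓘(ℝ, ℝ) I γ t ((1 : ℝ →L[ℝ] ℝ).smulRight v))
    (hconst : ∀ s, f (γ s) = y) : f' v = 0 := by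
  have hfγ : f ∘ γ = fun _ => y := funext hconst
  have h := hasMFDerivAt_unique (hf.comp_smulRight hγ rfl) (hfγ ▸ hasMFDerivAt_const y t)
  exact (one_smul ℝ (f' v)).symm.trans (DFunLike.congr_fun h 1)

theorem isMIntegralCurve_of_forall_hasMFDerivAt_comp_add {X : ∀ m : M, TangentSpace I m}
    (h : ∀ t, HasMFDerivAt 𝓘(ℝ, ℝ) I (fun s => γ (t + s)) 0
      ((1 : ℝ →L[ℝ] ℝ).smulRight (X (γ t)))) :
    IsMIntegralCurve γ X := by
  intro t
  have hsub : HasMFDerivAt 𝓘(ℝ, ℝ) 𝓘(ℝ, ℝ) (· - t) t (.id ℝ ℝ) :=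
    ((hasFDerivAt_id t).sub_const t).hasMFDerivAt
  have ht := h t
  rw [← sub_self t] at ht
  have hcomp := HasMFDerivAt.comp (f := (· - t)) t ht hsub
  rwa [show (fun s => γ (t + s)) ∘ (· - t) = γ from funext fun u => by simp] at hcomp

end Velocity

section Action

variable {G : Type*} [Monoid G]
  {F : Type*} [NormedAddCommGroup F] [NormedSpace ℝ F]
  {H' : Type*} [TopologicalSpace H'] {J : ModelWithCorners ℝ F H'}
  {M : Type*} [TopologicalSpace M] [ChartedSpace H' M] [MulAction G M]

theorem isMIntegralCurve_mul_smul_of_forall_hasMFDerivAt_zero {X : ∀ m : M, TangentSpace J m}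
    {c : ℝ → G} (hc_hom : ∀ t t' : ℝ, c (t + t') = c t * c t') {p : M}
    (hvel : ∀ g : G, HasMFDerivAt 𝓘(ℝ, ℝ) J (fun s => (g * c s) • p) 0
      ((1 : ℝ →L[ℝ] ℝ).smulRight (X (g • p))))
    (g₀ : G) : IsMIntegralCurve (fun t => (g₀ * c t) • p) X := by
  refine isMIntegralCurve_of_forall_hasMFDerivAt_comp_add fun t => ?_
  have hshift : (fun s => (g₀ * c (t + s)) • p) = fun s => (g₀ * c t * c s) • p := by
    simp only [hc_hom, mul_assoc]
  rw [hshift]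
  exact hvel (g₀ * c t)

variable {E : Type*} [NormedAddCommGroup E] [NormedSpace ℝ E]
  {H : Type*} [TopologicalSpace H] {I : ModelWithCorners ℝ E H}
  [TopologicalSpace G] [ChartedSpace H G]

theorem mfderiv_smul_const_apply_eq_zero_of_forall_smul_eq
    (hρ : MDifferentiable (I.prod J) J fun q : G × M => q.1 • q.2) {p : M} {h : ℝ → G}
    (hh : MDifferentiableAt 𝓘(ℝ, ℝ) I h 0) (h_one : h 0 = 1)
    (h_stab : ∀ x, h x • p = p) :
    mfderiv I J (fun a : G => a • p) 1 (mfderiv 𝓘(ℝ, ℝ) I h 0 (1 : ℝ)) = 0 := by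
  have hσ : MDifferentiable I J fun a : G => a • p :=
    hρ.comp (mdifferentiable_id.prodMk mdifferentiable_const)
  have hzero := (hσ (h 0)).hasMFDerivAt.apply_eq_zero_of_comp_const hh.hasMFDerivAt_smulRight
    h_stab
  rwa [h_one] at hzero

theorem hasMFDerivAt_mul_smul_curve
    (hρ : MDifferentiable (I.prod J) J fun q : G × M => q.1 • q.2)
    {c : ℝ → G} {ξ : TangentSpace I (c 0)}
    (hc : HasMFDerivAt 𝓘(ℝ, ℝ) I c 0 ((1 : ℝ →L[ℝ] ℝ).smulRight ξ)) (hc_one : c 0 = 1)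
    (g : G) (p : M) :
    HasMFDerivAt 𝓘(ℝ, ℝ) J (fun s => (g * c s) • p) 0 ((1 : ℝ →L[ℝ] ℝ).smulRight
      (mfderiv J J (fun x : M => g • x) p (mfderiv I J (fun a : G => a • p) 1 ξ))) := by
  have hσ : MDifferentiable I J fun a : G => a • p :=
    hρ.comp (mdifferentiable_id.prodMk mdifferentiable_const)
  have hτ : MDifferentiable J J fun x : M => g • x :=
    hρ.comp (mdifferentiable_const.prodMk mdifferentiable_id)
  have hcurve : (fun s => (g * c s) • p) = (g • ·) ∘ (· • p) ∘ c :=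
    funext fun s => mul_smul g (c s) p
  rw [hcurve]
  exact (hτ p).hasMFDerivAt.comp_smulRight ((hσ 1).hasMFDerivAt.comp_smulRight hc hc_one)
    (by simp [hc_one])

end Action

theorem exp_curve_is_integral_curve_general
    {E : Type*} [NormedAddCommGroup E] [NormedSpace ℝ E]
    {F : Type*} [NormedAddCommGroup F] [NormedSpace ℝ F]
    {G : Type*} [TopologicalSpace G] [ChartedSpace E G] [Group G]
    {I : ModelWithCorners ℝ E E}
    {M : Type*} [TopologicalSpace M] [ChartedSpace F M]
    {J : ModelWithCorners ℝ F F}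
    [MulAction G M]
    (hρ : ContMDiff (I.prod J) J (⊤ : ℕ∞) fun p : G × M => p.1 • p.2)
    -- the point `p = s(λ)` and the vector field `X`:
    (p : M) (X : ∀ m : M, TangentSpace J m)
    (hX_inv : ∀ (g : G) (m : M), mfderiv J J (fun x : M => g • x) m (X m) = X (g • m))
    -- `X(p) = (σ_λ)_{*,e}(η)` where `σ_λ = ρ_p`:
    (η : E) (hη : X p = mfderiv I J (fun g : G => g • p) (1 : G) η)
    -- `χ ∈ 𝔤_p`: initial velocity of a smooth curve in the isotropy subgroup `G_p`:
    (χ : E) (h_iso : ℝ → G) (h_iso_smooth : ContMDiff 𝓘(ℝ, ℝ) I (⊤ : ℕ∞) h_iso)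
    (h_iso_one : h_iso 0 = 1) (h_iso_stab : ∀ x : ℝ, h_iso x • p = p)
    (h_iso_vel : (mfderiv 𝓘(ℝ, ℝ) I h_iso 0 (1 : ℝ) : E) = χ)
    -- the one-parameter subgroup `c(t) = exp((η + χ) t)`:
    (c : ℝ → G) (hc_smooth : ContMDiff 𝓘(ℝ, ℝ) I (⊤ : ℕ∞) c)
    (hc_one : c 0 = 1) (hc_hom : ∀ t t' : ℝ, c (t + t') = c t * c t')
    (hc_vel : (mfderiv 𝓘(ℝ, ℝ) I c 0 (1 : ℝ) : E) = η + χ)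
    (g₀ : G) :
    (fun t : ℝ => (g₀ * c t) • p) 0 = g₀ • p ∧
      IsMIntegralCurve (fun t : ℝ => (g₀ * c t) • p) X := by
  have hsmul : MDifferentiable (I.prod J) J fun q : G × M => q.1 • q.2 :=
    hρ.mdifferentiable (by simp)
  have hχ : mfderiv I J (fun g : G => g • p) 1 χ = 0 := by
    rw [← h_iso_vel]
    exact mfderiv_smul_const_apply_eq_zero_of_forall_smul_eq hsmul
      (h_iso_smooth.mdifferentiable (by simp) 0) h_iso_one h_iso_stab
  have hξ : mfderiv I J (fun g : G => g • p) 1 (η + χ) = X p := by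
    -- `η + χ` is a sum in `E`, not in `TangentSpace I 1`, so `rw [map_add]` does not fire.
    have hadd : mfderiv I J (fun g : G => g • p) 1 (η + χ) =
        mfderiv I J (fun g : G => g • p) 1 η + mfderiv I J (fun g : G => g • p) 1 χ :=
      map_add _ _ _
    rw [hadd, hχ, add_zero, hη]
  have hvel (g : G) : HasMFDerivAt 𝓘(ℝ, ℝ) J (fun s => (g * c s) • p) 0
      ((1 : ℝ →L[ℝ] ℝ).smulRight (X (g • p))) := by
    have hcurve := hasMFDerivAt_mul_smul_curve hsmul
      (hc_smooth.mdifferentiable (by simp) 0).hasMFDerivAt_smulRight hc_one g p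
    rwa [hc_vel, hξ, hX_inv] at hcurve
  exact ⟨by simp [hc_one], isMIntegralCurve_mul_smul_of_forall_hasMFDerivAt_zero hc_hom hvel g₀⟩

/-- Let `ρ : G × M → M` (written `g • m`) be a smooth action, `p = s(λ)`
a point of `M`, and suppose `X` is a `G`-invariant vector field with
`X(p) = (σ_λ)_{*,e}(η)` where `σ_λ = ρ_p : g ↦ g • p`.  Then for any `χ` in the isotropy
Lie algebra `𝔤_p` (realized as the initial velocity of a smooth curve in the isotropy
subgroup `G_p`) and any `g₀ ∈ G`, the curve `Γ(t) = ρ(g₀ exp((η + χ) t), p)` is an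
integral curve of `X` with `Γ(0) = ρ(g₀, p)`.  The one-parameter subgroup
`t ↦ exp((η + χ) t)` is encoded as a smooth homomorphism `c : ℝ → G` with initial
velocity `η + χ`. -/
theorem exp_curve_is_integral_curve
    {E : Type*} [NormedAddCommGroup E] [NormedSpace ℝ E] [FiniteDimensional ℝ E]
    {F : Type*} [NormedAddCommGroup F] [NormedSpace ℝ F] [FiniteDimensional ℝ F]
    {G : Type*} [TopologicalSpace G] [ChartedSpace E G] [Group G]
    {I : ModelWithCorners ℝ E E} [LieGroup I (⊤ : ℕ∞) G]
    {M : Type*} [TopologicalSpace M] [ChartedSpace F M]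
    {J : ModelWithCorners ℝ F F} [IsManifold J (⊤ : ℕ∞) M]
    [MulAction G M]
    (hρ : ContMDiff (I.prod J) J (⊤ : ℕ∞) fun p : G × M => p.1 • p.2)
    -- the point `p = s(λ)` and the vector field `X`:
    (p : M) (X : ∀ m : M, TangentSpace J m)
    (hX_inv : ∀ (g : G) (m : M), mfderiv J J (fun x : M => g • x) m (X m) = X (g • m))
    -- `X(p) = (σ_λ)_{*,e}(η)` where `σ_λ = ρ_p`:
    (η : E) (hη : X p = mfderiv I J (fun g : G => g • p) (1 : G) η)
    -- `χ ∈ 𝔤_p`: initial velocity of a smooth curve in the isotropy subgroup `G_p`: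
    (χ : E) (h_iso : ℝ → G) (h_iso_smooth : ContMDiff 𝓘(ℝ, ℝ) I (⊤ : ℕ∞) h_iso)
    (h_iso_one : h_iso 0 = 1) (h_iso_stab : ∀ x : ℝ, h_iso x • p = p)
    (h_iso_vel : (mfderiv 𝓘(ℝ, ℝ) I h_iso 0 (1 : ℝ) : E) = χ)
    -- the one-parameter subgroup `c(t) = exp((η + χ) t)`:
    (c : ℝ → G) (hc_smooth : ContMDiff 𝓘(ℝ, ℝ) I (⊤ : ℕ∞) c)
    (hc_one : c 0 = 1) (hc_hom : ∀ t t' : ℝ, c (t + t') = c t * c t')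
    (hc_vel : (mfderiv 𝓘(ℝ, ℝ) I c 0 (1 : ℝ) : E) = η + χ)
    (g₀ : G) :
    (fun t : ℝ => (g₀ * c t) • p) 0 = g₀ • p ∧
      IsMIntegralCurve (fun t : ℝ => (g₀ * c t) • p) X :=
  exp_curve_is_integral_curve_general hρ p X hX_inv η hη χ h_iso h_iso_smooth h_iso_one h_iso_stab
    h_iso_vel c hc_smooth hc_one hc_hom hc_vel g₀
end
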